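/- arXiv:2409.00771 — 3 statements merged into one kernel-verified Lean document; each statement's English description precedes it below -/
import Mathlib

section
/- Swapping two adjacent same-type jobs j_a, j_b (with j_a before j_b and d_{j_a} > d_{j_b}) in a feasible schedule yields a feasible schedule: if in the original schedule every job meets its deadline, then after the swap every job still meets its deadline. -/
structure Job (T : Type) where
  t : ℕ
  d : ℕ
  τ : T

def comp {T : Type} (ℓ : T → T → ℕ) (π : ℕ → Job T) : ℕ → ℕ
  | 0 => (π 0).t
  | i + 1 => comp ℓ π i + ℓ (π i).τ (π (i + 1)).τ + (π (i + 1)).t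

/-!
Swapping two adjacent jobs of the same type changes no setup time, so every completion time
except the one at the first swapped position is unchanged. That position now holds `j_b`, which
completes no later than `j_b` did before, and `j_a`, moved later, completes exactly when `j_b` did,
which is before `d_{j_b} < d_{j_a}`.
-/

section
variable {T : Type} {ℓ : T → T → ℕ}

theorem comp_congr {π π' : ℕ → Job T} {k : ℕ} (h : ∀ i ≤ k, π' i = π i) :
    comp ℓ π' k = comp ℓ π k := by
  induction k with
  | zero => rw [comp, comp, h 0 le_rfl]
  | succ k ih =>
    rw [comp, comp, ih fun i hi => h i (by omega), h k (by omega), h (k + 1) le_rfl]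

theorem comp_succ_of_τ_eq (hℓ : ∀ τ, ℓ τ τ = 0) {π : ℕ → Job T} {i : ℕ}
    (hτ : (π i).τ = (π (i + 1)).τ) : comp ℓ π (i + 1) = comp ℓ π i + (π (i + 1)).t := by
  rw [comp, hτ, hℓ, add_zero]

theorem comp_add_t_eq_of_replace {π π' : ℕ → Job T} {a : ℕ} (h : ∀ i < a, π' i = π i)
    (hτ : (π' a).τ = (π a).τ) : comp ℓ π' a + (π a).t = comp ℓ π a + (π' a).t := by
  cases a with
  | zero => rw [comp, comp, add_comm]
  | succ k =>
    rw [comp, comp, comp_congr fun i hi => h i (by omega), h k (by omega), hτ]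
    omega

theorem comp_eq_of_le {π π' : ℕ → Job T} {k : ℕ} (hk : comp ℓ π' k = comp ℓ π k)
    (hτ : (π' k).τ = (π k).τ) (h : ∀ i, k < i → π' i = π i) {j : ℕ} (hj : k ≤ j) :
    comp ℓ π' j = comp ℓ π j := by
  induction j, hj using Nat.le_induction with
  | base => exact hk
  | succ j hkj ih =>
    have hτj : (π' j).τ = (π j).τ := by
      rcases hkj.eq_or_lt with rfl | hlt
      · exact hτ
      · rw [h j hlt]
    rw [comp, comp, ih, hτj, h (j + 1) (by omega)]

def IsAdjacentSwap (π π' : ℕ → Job T) (a : ℕ) : Prop :=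
  π' a = π (a + 1) ∧ π' (a + 1) = π a ∧ ∀ i, i ≠ a → i ≠ a + 1 → π' i = π i

namespace IsAdjacentSwap

variable {π π' : ℕ → Job T} {a : ℕ}

theorem τ_eq (hs : IsAdjacentSwap π π' a) (hτ : (π a).τ = (π (a + 1)).τ) (i : ℕ) :
    (π' i).τ = (π i).τ := by
  obtain ⟨h1, h2, h3⟩ := hs
  by_cases hia : i = a
  · rw [hia, h1, hτ]
  by_cases hib : i = a + 1
  · rw [hib, h2, hτ]
  rw [h3 i hia hib]

theorem comp_add_t_eq (hℓ : ∀ τ, ℓ τ τ = 0) (hs : IsAdjacentSwap π π' a)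
    (hτ : (π a).τ = (π (a + 1)).τ) : comp ℓ π' a + (π a).t = comp ℓ π (a + 1) := by
  rw [comp_add_t_eq_of_replace (fun i hi => hs.2.2 i (by omega) (by omega)) (hs.τ_eq hτ a),
    hs.1, comp_succ_of_τ_eq hℓ hτ]

theorem comp_eq_of_ne (hℓ : ∀ τ, ℓ τ τ = 0) (hs : IsAdjacentSwap π π' a)
    (hτ : (π a).τ = (π (a + 1)).τ) {i : ℕ} (hi : i ≠ a) : comp ℓ π' i = comp ℓ π i := by
  rcases Nat.lt_or_gt_of_ne hi with hlt | hgt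
  · exact comp_congr fun j hj => hs.2.2 j (by omega) (by omega)
  have hsucc : comp ℓ π' (a + 1) = comp ℓ π (a + 1) := by
    rw [comp_succ_of_τ_eq hℓ (by rw [hs.1, hs.2.1, hτ]), hs.2.1, hs.comp_add_t_eq hℓ hτ]
  exact comp_eq_of_le hsucc (hs.τ_eq hτ _) (fun j hj => hs.2.2 j (by omega) (by omega)) hgt

end IsAdjacentSwap

end

theorem stmt3 {T : Type} (ℓ : T → T → ℕ) (hℓ : ∀ τ, ℓ τ τ = 0)
    (π π' : ℕ → Job T) (n a : ℕ) (han : a + 1 < n)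
    (hτ : (π a).τ = (π (a + 1)).τ) (hd : (π (a + 1)).d < (π a).d)
    (h1 : π' a = π (a + 1)) (h2 : π' (a + 1) = π a)
    (h3 : ∀ i, i ≠ a → i ≠ a + 1 → π' i = π i)
    (hfeas : ∀ i, i < n → comp ℓ π i ≤ (π i).d) :
    ∀ i, i < n → comp ℓ π' i ≤ (π' i).d := by
  have hs : IsAdjacentSwap π π' a := ⟨h1, h2, h3⟩
  have hlast := hfeas (a + 1) han
  intro i hi
  by_cases hia : i = a
  · subst hia
    have := hs.comp_add_t_eq hℓ hτ
    rw [h1]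
    omega
  rw [hs.comp_eq_of_ne hℓ hτ hia]
  by_cases hib : i = a + 1
  · rw [hib, h2]
    omega
  rw [h3 i hia hib]
  exact hfeas i hi
end

section
/- Suppose the setup mapping ℓ satisfies the triangle inequality. Let a schedule contain the consecutive pattern (prefix ending in type τ_pre) ∘ (j_a) ∘ σ ∘ (j_b) ∘ suffix, where j_a and j_b have the same type τ and no job of σ has type τ. Then moving j_a to just before j_b, yielding prefix ∘ σ ∘ (j_a, j_b) ∘ suffix, does not increase the makespan; precisely, the change in makespan equals ℓ(τ_pre, τ^1_σ) + ℓ(τ^2_σ, τ) − (ℓ(τ_pre, τ) + ℓ(τ, τ^1_σ) + ℓ(τ^2_σ, τ)) ≤ 0, where τ^1_σ and τ^2_σ are the types of the first and last job of σ. -/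
def cost {T : Type} (ℓ : T → T → ℕ) : List (Job T) → ℕ
  | [] => 0
  | [j] => j.t
  | j1 :: j2 :: rest => j1.t + ℓ j1.τ j2.τ + cost ℓ (j2 :: rest)

theorem cost_append {T : Type} (ℓ : T → T → ℕ) {l₁ l₂ : List (Job T)} {a b : Job T}
    (h₁ : l₁.getLast? = some a) (h₂ : l₂.head? = some b) :
    cost ℓ (l₁ ++ l₂) = cost ℓ l₁ + ℓ a.τ b.τ + cost ℓ l₂ := by
  obtain ⟨l₂, rfl⟩ := List.head?_eq_some_iff.mp h₂
  induction l₁ with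
  | nil => simp at h₁
  | cons x rest ih =>
    rcases rest with _ | ⟨y, rest⟩
    · obtain rfl : x = a := by simpa using h₁
      rfl
    · rw [List.getLast?_cons_cons] at h₁
      have hrest := ih h₁
      simp only [List.cons_append, cost] at hrest ⊢
      omega

theorem stmt4_general {T : Type} (ℓ : T → T → ℕ)
    (hrefl : ∀ τ, ℓ τ τ = 0)
    (htri : ∀ τ1 τ2 τ3, ℓ τ1 τ3 ≤ ℓ τ1 τ2 + ℓ τ2 τ3)
    (pre σ suf : List (Job T)) (ja jb jpre js1 js2 : Job T) (τ τpre : T)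
    (hja : ja.τ = τ) (hjb : jb.τ = τ)
    (hpre : pre.getLast? = some jpre) (hτpre : jpre.τ = τpre)
    (hσ1 : σ.head? = some js1) (hσ2 : σ.getLast? = some js2) :
    cost ℓ (pre ++ σ ++ [ja, jb] ++ suf) + (ℓ τpre τ + ℓ τ js1.τ + ℓ js2.τ τ)
      = cost ℓ (pre ++ [ja] ++ σ ++ [jb] ++ suf) + (ℓ τpre js1.τ + ℓ js2.τ τ) ∧
    cost ℓ (pre ++ σ ++ [ja, jb] ++ suf) ≤ cost ℓ (pre ++ [ja] ++ σ ++ [jb] ++ suf) := by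
  have hσhead : ∀ l : List (Job T), (σ ++ l).head? = some js1 := fun l => by
    simp [List.head?_append, hσ1]
  have moved : cost ℓ (pre ++ σ ++ [ja, jb] ++ suf)
      = cost ℓ pre + ℓ τpre js1.τ + cost ℓ σ + ℓ js2.τ τ + ja.t + cost ℓ (jb :: suf) := by
    rw [List.append_assoc, List.append_assoc, cost_append ℓ hpre (hσhead _),
      cost_append ℓ hσ2 rfl]
    simp only [List.cons_append, List.nil_append, cost, hja, hjb, hrefl, hτpre]
    omega
  have original : cost ℓ (pre ++ [ja] ++ σ ++ [jb] ++ suf)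
      = cost ℓ pre + ℓ τpre τ + ja.t + ℓ τ js1.τ + cost ℓ σ + ℓ js2.τ τ + cost ℓ (jb :: suf) := by
    rw [show pre ++ [ja] ++ σ ++ [jb] ++ suf = pre ++ [ja] ++ (σ ++ jb :: suf) by simp,
      cost_append ℓ (List.getLast?_concat ..) (hσhead _), cost_append ℓ hpre rfl,
      cost_append ℓ hσ2 rfl]
    simp only [cost, hja, hjb, hτpre]
    omega
  have hdetour := htri τpre τ js1.τ
  constructor <;> omega

theorem stmt4 {T : Type} (ℓ : T → T → ℕ)
    (hrefl : ∀ τ, ℓ τ τ = 0)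
    (htri : ∀ τ1 τ2 τ3, ℓ τ1 τ3 ≤ ℓ τ1 τ2 + ℓ τ2 τ3)
    (pre σ suf : List (Job T)) (ja jb jpre js1 js2 : Job T) (τ τpre : T)
    (hja : ja.τ = τ) (hjb : jb.τ = τ)
    (hσ : ∀ j ∈ σ, j.τ ≠ τ)
    (hpre : pre.getLast? = some jpre) (hτpre : jpre.τ = τpre)
    (hσ1 : σ.head? = some js1) (hσ2 : σ.getLast? = some js2) :
    cost ℓ (pre ++ σ ++ [ja, jb] ++ suf) + (ℓ τpre τ + ℓ τ js1.τ + ℓ js2.τ τ)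
      = cost ℓ (pre ++ [ja] ++ σ ++ [jb] ++ suf) + (ℓ τpre js1.τ + ℓ js2.τ τ) ∧
    cost ℓ (pre ++ σ ++ [ja, jb] ++ suf) ≤ cost ℓ (pre ++ [ja] ++ σ ++ [jb] ++ suf) :=
  stmt4_general ℓ hrefl htri pre σ suf ja jb jpre js1 js2 τ τpre hja hjb hpre hτpre hσ1 hσ2
end

section
/- Let ℓ satisfy ℓ(τ,τ)=0 and the triangle inequality. If there exists a feasible schedule π' of a job set J with makespan at most M, then there exists a feasible EDDS π'' of J with makespan at most M. -/
def feasibleL {T : Type} (ℓ : T → T → ℕ) (L : List (Job T)) : Prop :=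
  ∀ (i : ℕ) (h : i < L.length), cost ℓ (L.take (i + 1)) ≤ (L.get ⟨i, h⟩).d

def EDDS {T : Type} [DecidableEq T] (L : List (Job T)) : Prop :=
  ∀ τ : T, List.Pairwise (· ≤ ·) ((L.filter (fun j => j.τ = τ)).map Job.d)

/-!
Exchange argument. Suppose jobs `u` before `v` have the same type and `v.d < u.d`, with no job
of that type between them, and move `u` to directly behind `v`. By the triangle inequality,
deleting `u` from its old place delays no job, and since `ℓ τ τ = 0`, reinserting it behind `v`
costs exactly its processing time. So every other job finishes no later than before, `u`
finishes no later than `v` did, and `v.d ≤ u.d`. The makespan does not grow and the number of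
same-type deadline inversions drops by one, so repeating the move ends in a feasible EDDS.
-/

section Cost

variable {T : Type} {ℓ : T → T → ℕ}

def setupCost (ℓ : T → T → ℕ) : List T → ℕ
  | a :: b :: r => ℓ a b + setupCost ℓ (b :: r)
  | _ => 0

theorem cost_eq_sum_add_setupCost (L : List (Job T)) :
    cost ℓ L = (L.map Job.t).sum + setupCost ℓ (L.map Job.τ) := by
  fun_induction cost ℓ L <;> simp_all [setupCost]
  omega

theorem setupCost_le_setupCost_cons (a : T) : ∀ l : List T, setupCost ℓ l ≤ setupCost ℓ (a :: l)
  | [] => le_rfl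
  | _ :: _ => Nat.le_add_left _ _

theorem setupCost_le_setupCost_insert (htri : ∀ τ1 τ2 τ3, ℓ τ1 τ3 ≤ ℓ τ1 τ2 + ℓ τ2 τ3)
    (a : T) (l : List T) : ∀ P : List T, setupCost ℓ (P ++ l) ≤ setupCost ℓ (P ++ a :: l)
  | [] => setupCost_le_setupCost_cons a l
  | [p] => by
    cases l with
    | nil => exact Nat.zero_le _
    | cons b l =>
      simp only [List.cons_append, List.nil_append, setupCost]
      have := htri p a b
      omega
  | p :: q :: P => by
    have := setupCost_le_setupCost_insert htri a l (q :: P)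
    simp only [List.cons_append, setupCost] at this ⊢
    omega

theorem setupCost_append_cons_cons_self (hrefl : ∀ τ, ℓ τ τ = 0) (a : T) (l : List T) :
    ∀ P : List T, setupCost ℓ (P ++ a :: a :: l) = setupCost ℓ (P ++ a :: l)
  | [] => by simp [setupCost, hrefl]
  | [p] => by simp [setupCost, hrefl]
  | p :: q :: P => by
    have := setupCost_append_cons_cons_self hrefl a l (q :: P)
    simp only [List.cons_append, setupCost] at this ⊢
    omega

theorem cost_append_add_le_cost_insert (htri : ∀ τ1 τ2 τ3, ℓ τ1 τ3 ≤ ℓ τ1 τ2 + ℓ τ2 τ3)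
    (u : Job T) (X Y : List (Job T)) : cost ℓ (X ++ Y) + u.t ≤ cost ℓ (X ++ u :: Y) := by
  have := setupCost_le_setupCost_insert htri u.τ (Y.map Job.τ) (X.map Job.τ)
  simp only [cost_eq_sum_add_setupCost, List.map_append, List.map_cons, List.sum_append,
    List.sum_cons] at this ⊢
  omega

theorem cost_append_cons_cons (hrefl : ∀ τ, ℓ τ τ = 0) {u v : Job T} (huv : u.τ = v.τ)
    (X Y : List (Job T)) : cost ℓ (X ++ v :: u :: Y) = cost ℓ (X ++ v :: Y) + u.t := by
  have := setupCost_append_cons_cons_self hrefl v.τ (Y.map Job.τ) (X.map Job.τ)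
  simp only [cost_eq_sum_add_setupCost, List.map_append, List.map_cons, List.sum_append,
    List.sum_cons, huv] at this ⊢
  omega

theorem cost_moveAfter_le (hrefl : ∀ τ, ℓ τ τ = 0)
    (htri : ∀ τ1 τ2 τ3, ℓ τ1 τ3 ≤ ℓ τ1 τ2 + ℓ τ2 τ3) {u v : Job T} (huv : u.τ = v.τ)
    (A B C : List (Job T)) : cost ℓ (A ++ B ++ v :: u :: C) ≤ cost ℓ (A ++ u :: B ++ v :: C) :=
  calc cost ℓ (A ++ B ++ v :: u :: C)
      = cost ℓ (A ++ B ++ v :: C) + u.t := cost_append_cons_cons hrefl huv (A ++ B) C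
    _ ≤ cost ℓ (A ++ u :: B ++ v :: C) := by
        simpa using cost_append_add_le_cost_insert htri u A (B ++ v :: C)

end Cost

theorem List.append_cons_eq_append {α : Type*} {P S A R : List α} {j : α}
    (h : P ++ j :: S = A ++ R) :
    (∃ S', A = P ++ j :: S') ∨ ∃ Q, P = A ++ Q ∧ R = Q ++ j :: S := by
  rcases List.append_eq_append_iff.1 h with ⟨as, rfl, has⟩ | ⟨Q, rfl, hR⟩
  · rcases List.cons_eq_append_iff.1 has with ⟨rfl, rfl⟩ | ⟨S', rfl, -⟩
    · exact .inr ⟨[], by simp, rfl⟩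
    · exact .inl ⟨S', rfl⟩
  · exact .inr ⟨Q, rfl, hR⟩

section Feasibility

variable {T : Type} {ℓ : T → T → ℕ}

theorem feasibleL_iff_forall_eq_append_cons (L : List (Job T)) :
    feasibleL ℓ L ↔ ∀ P j S, L = P ++ j :: S → cost ℓ (P ++ [j]) ≤ j.d := by
  constructor
  · rintro hf P j S rfl
    have htake : (P ++ j :: S).take (P.length + 1) = P ++ [j] := by simp [List.take_append]
    simpa [htake] using hf P.length (by simp)
  · intro hf i hi
    have hsplit : L = L.take i ++ L[i] :: L.drop (i + 1) := by
      rw [← List.drop_eq_getElem_cons hi, List.take_append_drop]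
    rw [List.get_eq_getElem, List.take_succ_eq_append_getElem hi]
    exact hf _ _ _ hsplit

theorem feasibleL_moveAfter (hrefl : ∀ τ, ℓ τ τ = 0)
    (htri : ∀ τ1 τ2 τ3, ℓ τ1 τ3 ≤ ℓ τ1 τ2 + ℓ τ2 τ3) {u v : Job T} (huv : u.τ = v.τ)
    (hd : v.d ≤ u.d) {A B C : List (Job T)} (hf : feasibleL ℓ (A ++ u :: B ++ v :: C)) :
    feasibleL ℓ (A ++ B ++ v :: u :: C) := by
  rw [feasibleL_iff_forall_eq_append_cons] at hf ⊢
  intro P j S hsplit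
  rw [List.append_assoc] at hsplit
  rcases List.append_cons_eq_append hsplit.symm with ⟨S', rfl⟩ | ⟨Q, rfl, hQ⟩
  · exact hf P j (S' ++ u :: B ++ v :: C) (by simp)
  replace hQ : (B ++ [v]) ++ u :: C = Q ++ j :: S := by simpa using hQ
  rcases List.append_cons_eq_append hQ.symm with ⟨S', hBv⟩ | ⟨Q', rfl, hQ'⟩
  · have hBvC : B ++ v :: C = Q ++ j :: (S' ++ C) := by simpa using congrArg (· ++ C) hBv
    calc cost ℓ (A ++ Q ++ [j])
        ≤ cost ℓ (A ++ Q ++ [j]) + u.t := Nat.le_add_right _ _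
      _ ≤ cost ℓ (A ++ u :: (Q ++ [j])) := by
          simpa using cost_append_add_le_cost_insert htri u A (Q ++ [j])
      _ ≤ j.d := by simpa using hf (A ++ u :: Q) j (S' ++ C) (by simp [hBvC])
  rcases List.cons_eq_append_iff.1 hQ' with ⟨rfl, rfl, rfl⟩ | ⟨Q'', rfl, rfl⟩
  · calc cost ℓ (A ++ (B ++ [v] ++ []) ++ [u])
        ≤ cost ℓ (A ++ u :: B ++ [v]) := by simpa using cost_moveAfter_le hrefl htri huv A B []
      _ ≤ v.d := by simpa using hf (A ++ u :: B) v C (by simp)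
      _ ≤ u.d := hd
  · calc cost ℓ (A ++ (B ++ [v] ++ u :: Q'') ++ [j])
        ≤ cost ℓ (A ++ u :: B ++ v :: (Q'' ++ [j])) := by
          simpa using cost_moveAfter_le hrefl htri huv A B (Q'' ++ [j])
      _ ≤ j.d := by simpa using hf (A ++ u :: B ++ v :: Q'') j S (by simp)

end Feasibility

theorem List.append_cons_cons_perm {α : Type*} (B C : List α) (u v : α) :
    (B ++ v :: u :: C).Perm (u :: (B ++ v :: C)) := by
  simpa using List.perm_middle (l₁ := B ++ [v]) (l₂ := C) (a := u)

section Inversions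

variable {α : Type*} (R : α → α → Prop) [DecidableRel R]

def inversions : List α → ℕ
  | [] => 0
  | a :: l => l.countP (fun b => R a b) + inversions l

variable {R}

theorem inversions_append_add_of_perm {X Y : List α} (hXY : X.Perm Y) :
    ∀ A : List α, inversions R (A ++ X) + inversions R Y = inversions R (A ++ Y) + inversions R X
  | [] => Nat.add_comm _ _
  | a :: A => by
    have := inversions_append_add_of_perm hXY A
    simp only [List.cons_append, inversions, ((hXY.append_left A).countP_eq _)]
    omega

theorem inversions_cons_append_cons {u v : α} (huv : R u v) (hvu : ¬R v u) (C : List α) :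
    ∀ B : List α, (∀ b ∈ B, ¬R u b ∧ ¬R b u) →
      inversions R (u :: (B ++ v :: C)) = inversions R (B ++ v :: u :: C) + 1
  | [], _ => by simp [inversions, huv, hvu]; omega
  | b :: B, hB => by
    have := inversions_cons_append_cons huv hvu C B fun x hx => hB x (List.mem_cons_of_mem b hx)
    have hbu := hB b List.mem_cons_self
    simp only [List.cons_append, inversions, List.countP_cons, hbu.1, hbu.2, decide_false,
      (List.append_cons_cons_perm B C u v).countP_eq] at this ⊢
    omega

theorem inversions_moveAfter_lt {u v : α} (huv : R u v) (hvu : ¬R v u) {A B C : List α}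
    (hB : ∀ b ∈ B, ¬R u b ∧ ¬R b u) :
    inversions R (A ++ B ++ v :: u :: C) < inversions R (A ++ u :: B ++ v :: C) := by
  have := inversions_append_add_of_perm (R := R) (List.append_cons_cons_perm B C u v) A
  have := inversions_cons_append_cons huv hvu C B hB
  simp only [List.append_assoc, List.cons_append]
  omega

end Inversions

theorem List.exists_descent_of_not_pairwise_filter_map {α β : Type*} [LinearOrder β]
    {p : α → Bool} {f : α → β} {L : List α} (h : ¬((L.filter p).map f).Pairwise (· ≤ ·)) :
    ∃ A u B v C, L = A ++ u :: B ++ v :: C ∧ p u ∧ p v ∧ f v < f u ∧ ∀ b ∈ B, ¬p b := by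
  rw [← List.isChain_iff_pairwise, List.isChain_iff_forall_rel_of_append_cons_cons] at h
  push Not at h
  obtain ⟨a, b, F₁, F₂, hF, hab⟩ := h
  obtain ⟨G, H, hGH, -, hH⟩ := List.map_eq_append_iff.1 hF
  obtain ⟨u, H', rfl, rfl, hH'⟩ := List.map_eq_cons_iff.1 hH
  obtain ⟨v, F, rfl, rfl, -⟩ := List.map_eq_cons_iff.1 hH'
  obtain ⟨L₁, L₂, rfl, -, hL₂⟩ := List.filter_eq_append_iff.1 hGH
  obtain ⟨A, L₃, rfl, -, hu, hL₃⟩ := List.filter_eq_cons_iff.1 hL₂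
  obtain ⟨B, C, rfl, hB, hv, -⟩ := List.filter_eq_cons_iff.1 hL₃
  exact ⟨L₁ ++ A, u, B, v, C, by simp, hu, hv, hab, hB⟩

section Schedule

variable {T : Type} [DecidableEq T] {ℓ : T → T → ℕ}

def IsInversion (x y : Job T) : Prop := x.τ = y.τ ∧ y.d < x.d

instance : DecidableRel (IsInversion : Job T → Job T → Prop) := fun x y =>
  inferInstanceAs (Decidable (x.τ = y.τ ∧ y.d < x.d))

theorem exists_inversion_of_not_EDDS {L : List (Job T)} (h : ¬EDDS L) :
    ∃ A u B v C, L = A ++ u :: B ++ v :: C ∧ IsInversion u v ∧ ∀ b ∈ B, b.τ ≠ u.τ := by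
  obtain ⟨τ, hτ⟩ := not_forall.1 h
  obtain ⟨A, u, B, v, C, rfl, hu, hv, hd, hB⟩ := List.exists_descent_of_not_pairwise_filter_map hτ
  simp only [decide_eq_true_eq] at hu hv hB
  exact ⟨A, u, B, v, C, rfl, ⟨hu.trans hv.symm, hd⟩, fun b hb => hu ▸ hB b hb⟩

theorem exists_fewer_inversions_of_not_EDDS (hrefl : ∀ τ, ℓ τ τ = 0)
    (htri : ∀ τ1 τ2 τ3, ℓ τ1 τ3 ≤ ℓ τ1 τ2 + ℓ τ2 τ3) {L : List (Job T)} (hf : feasibleL ℓ L)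
    (hE : ¬EDDS L) :
    ∃ L', L'.Perm L ∧ feasibleL ℓ L' ∧ cost ℓ L' ≤ cost ℓ L ∧
      inversions IsInversion L' < inversions IsInversion L := by
  obtain ⟨A, u, B, v, C, rfl, ⟨huv, hd⟩, hB⟩ := exists_inversion_of_not_EDDS hE
  refine ⟨A ++ B ++ v :: u :: C, ?_, feasibleL_moveAfter hrefl htri huv hd.le hf, ?_,
    inversions_moveAfter_lt ⟨huv, hd⟩ (fun h => lt_asymm hd h.2)
      fun b hb => ⟨fun h => hB b hb h.1.symm, fun h => hB b hb h.1⟩⟩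
  · simpa using (List.append_cons_cons_perm B C u v).append_left A
  · exact cost_moveAfter_le hrefl htri huv A B C

theorem exists_feasible_EDDS (hrefl : ∀ τ, ℓ τ τ = 0)
    (htri : ∀ τ1 τ2 τ3, ℓ τ1 τ3 ≤ ℓ τ1 τ2 + ℓ τ2 τ3) {L : List (Job T)} (hf : feasibleL ℓ L) :
    ∃ L', L'.Perm L ∧ feasibleL ℓ L' ∧ EDDS L' ∧ cost ℓ L' ≤ cost ℓ L := by
  by_cases hE : EDDS L
  · exact ⟨L, .refl L, hf, hE, le_rfl⟩
  obtain ⟨L₁, hperm₁, hf₁, hcost₁, hinv₁⟩ := exists_fewer_inversions_of_not_EDDS hrefl htri hf hE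
  obtain ⟨L₂, hperm₂, hf₂, hE₂, hcost₂⟩ := exists_feasible_EDDS hrefl htri hf₁
  exact ⟨L₂, hperm₂.trans hperm₁, hf₂, hE₂, hcost₂.trans hcost₁⟩
termination_by inversions IsInversion L

end Schedule

theorem stmt6 {T : Type} [DecidableEq T] (ℓ : T → T → ℕ)
    (hrefl : ∀ τ, ℓ τ τ = 0)
    (htri : ∀ τ1 τ2 τ3, ℓ τ1 τ3 ≤ ℓ τ1 τ2 + ℓ τ2 τ3)
    (J : List (Job T)) (M : ℕ)
    (h : ∃ L : List (Job T), L.Perm J ∧ feasibleL ℓ L ∧ cost ℓ L ≤ M) :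
    ∃ L : List (Job T), L.Perm J ∧ feasibleL ℓ L ∧ EDDS L ∧ cost ℓ L ≤ M := by
  obtain ⟨L, hperm, hf, hcost⟩ := h
  obtain ⟨L', hperm', hf', hE', hcost'⟩ := exists_feasible_EDDS hrefl htri hf
  exact ⟨L', hperm'.trans hperm, hf', hE', hcost'.trans hcost⟩
end
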